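/- Let a < b be real numbers, λ > 0, and y ∈ [a, b]. Let n = ⌊λ(b - a)/(2π)⌋. Then the set {x ∈ [a,b] : 0.5(sin(λx) + 1)(b - a) + a = y} contains at least n elements. -/

import Mathlib

/-!
The map `x ↦ (sin (λx) + 1)(b - a)/2 + a` is periodic with period `p = 2π/λ` and attains every
value of `[a, b]`. Reducing one preimage of `y` into `[a, a + p)` and translating it by
`0, p, …, (n - 1)p` gives `n` distinct preimages in `[a, b]` as soon as `n p ≤ b - a`.
-/

open Set Function

theorem Function.Periodic.natCast_le_encard_Icc_fiber {α β : Type*} [Field α] [LinearOrder α]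
    [IsStrictOrderedRing α] [Archimedean α] {f : α → β} {p : α} (hf : Periodic f p) (hp : 0 < p)
    {c : β} (hc : c ∈ range f) {u v : α} {n : ℕ} (hn : n * p ≤ v - u) :
    (n : ℕ∞) ≤ {x ∈ Icc u v | f x = c}.encard := by
  obtain ⟨x₀, rfl⟩ := hc
  set t := toIcoMod hp u x₀
  have ht : t ∈ Ico u (u + p) := toIcoMod_mem_Ico hp u x₀
  have hft : f t = f x₀ := hf.sub_zsmul_eq _
  have hinj : Injective fun k : ℕ => t + k * p := fun i j hij => by
    simpa [hp.ne'] using hij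
  calc (n : ℕ∞) = {k | k < n}.encard := (Nat.encard_range n).symm
    _ = ((fun k : ℕ => t + k * p) '' {k | k < n}).encard := (hinj.encard_image _).symm
    _ ≤ _ := by
      refine Set.encard_le_encard ?_
      rintro _ ⟨k, hk, rfl⟩
      have hk' : (k : α) + 1 ≤ n := by exact_mod_cast (show k + 1 ≤ n from hk)
      refine ⟨⟨?_, ?_⟩, by rw [hf.nat_mul k, hft]⟩
      · nlinarith [ht.1]
      · nlinarith [ht.2]

theorem Real.range_sin_const_mul {lam : ℝ} (hlam : lam ≠ 0) :
    range (fun x => Real.sin (lam * x)) = Icc (-1) 1 := by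
  rw [← Real.range_sin]
  exact (mul_left_surjective₀ hlam).range_comp Real.sin

theorem Real.Icc_subset_range_half_sin_add_one {a b lam : ℝ} (hab : a < b) (hlam : lam ≠ 0) :
    Icc a b ⊆ range fun x => 0.5 * (Real.sin (lam * x) + 1) * (b - a) + a := by
  intro y ⟨hya, hyb⟩
  have hba : 0 < b - a := sub_pos.2 hab
  obtain ⟨x, hx⟩ : 2 * (y - a) / (b - a) - 1 ∈ range fun x => Real.sin (lam * x) := by
    rw [Real.range_sin_const_mul hlam, mem_Icc, le_sub_iff_add_le, sub_le_iff_le_add,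
      le_div_iff₀ hba, div_le_iff₀ hba]
    constructor <;> linarith
  refine ⟨x, ?_⟩
  simp only at hx ⊢
  rw [hx]
  field_simp
  ring

/-- For `y ∈ [a,b]`, the equation `0.5(sin(λx)+1)(b-a) + a = y` has at least
`⌊λ(b-a)/(2π)⌋` solutions `x` in `[a,b]`. -/
theorem stmt_8 (a b lam : ℝ) (hab : a < b) (hlam : 0 < lam)
    (y : ℝ) (hy : y ∈ Set.Icc a b) :
    (⌊lam * (b - a) / (2 * Real.pi)⌋₊ : ℕ∞) ≤
      {x ∈ Set.Icc a b | 0.5 * (Real.sin (lam * x) + 1) * (b - a) + a = y}.encard := by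
  have hperiodic : Periodic (fun x => 0.5 * (Real.sin (lam * x) + 1) * (b - a) + a)
      (lam⁻¹ * (2 * Real.pi)) :=
    (Real.sin_periodic.const_mul lam).comp fun s => 0.5 * (s + 1) * (b - a) + a
  have hlength : (⌊lam * (b - a) / (2 * Real.pi)⌋₊ : ℝ) * (lam⁻¹ * (2 * Real.pi)) ≤ b - a := by
    calc _ ≤ lam * (b - a) / (2 * Real.pi) * (lam⁻¹ * (2 * Real.pi)) := by
          gcongr
          exact Nat.floor_le (by have := sub_pos.2 hab; positivity)
      _ = b - a := by field_simp
  exact hperiodic.natCast_le_encard_Icc_fiber (by positivity)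
    (Real.Icc_subset_range_half_sin_add_one hab hlam.ne' hy) hlength
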